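/- With the construction ∂(T⊗a) = Σ_{i,j}((T⊗I_p)Δ_{ij})⊗∂_{ij}a on Ã = M_p⊗A from a multivariable GDQ ring (A, μ, (∂_{ij})), ∂ is coassociative: (∂⊗id_Ã)∘∂ = (id_Ã⊗∂)∘∂. -/

import Mathlib

/-
Up to reshuffling tensor factors, `∂ = Σ_{ij} L_{ij} ⊗ ∂_{ij}` with
`L_{ij} T = (T ⊗ I_p) Δ_{ij} = Σ_k T e_{ki} ⊗ e_{jk}`. The matrix maps `L_{ij}` satisfy the same
compatibility as the `∂_{ij}`: both `(L_{kl} ⊗ id) L_{ij}` and `(id ⊗ L_{ij}) L_{kl}` send `T` to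
`Σ_m T e_{mk} ⊗ e_{li} ⊗ e_{jm}`. So each term `(L_{kl} ⊗ id) L_{ij} ⊗ (∂_{kl} ⊗ id) ∂_{ij}` of
`(∂ ⊗ id) ∂` equals the term `(id ⊗ L_{ij}) L_{kl} ⊗ (id ⊗ ∂_{ij}) ∂_{kl}` of `(id ⊗ ∂) ∂`, and the
two double sums agree after exchanging `ij` and `kl`.
-/

open TensorProduct

noncomputable section

variable {p : ℕ} {A : Type*} [Ring A] [Algebra ℂ A]

/-- Matrix unit `e_{ij}` in `M_p(ℂ)`. -/
def matUnit (i j : Fin p) : Matrix (Fin p) (Fin p) ℂ := Matrix.single i j 1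

/-- The map `T ⊗ (x ⊗ y) ↦ (T e_{ki} ⊗ x) ⊗ (e_{jk} ⊗ y)`. -/
def Lmap (i j k : Fin p) :
    (Matrix (Fin p) (Fin p) ℂ ⊗[ℂ] (A ⊗[ℂ] A)) →ₗ[ℂ]
      (Matrix (Fin p) (Fin p) ℂ ⊗[ℂ] A) ⊗[ℂ] (Matrix (Fin p) (Fin p) ℂ ⊗[ℂ] A) :=
  (TensorProduct.map
      (TensorProduct.map (LinearMap.mulRight ℂ (matUnit k i)) LinearMap.id)
      (TensorProduct.mk ℂ (Matrix (Fin p) (Fin p) ℂ) A (matUnit j k))).comp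
    (TensorProduct.assoc ℂ (Matrix (Fin p) (Fin p) ℂ) A A).symm.toLinearMap

/-- The comultiplication `∂` on `Ã = M_p ⊗ A`. -/
def Dbig (D : Fin p → Fin p → (A →ₗ[ℂ] A ⊗[ℂ] A)) :
    (Matrix (Fin p) (Fin p) ℂ ⊗[ℂ] A) →ₗ[ℂ]
      (Matrix (Fin p) (Fin p) ℂ ⊗[ℂ] A) ⊗[ℂ] (Matrix (Fin p) (Fin p) ℂ ⊗[ℂ] A) :=
  ∑ i : Fin p, ∑ j : Fin p, ∑ k : Fin p,
    (Lmap i j k).comp (LinearMap.lTensor (Matrix (Fin p) (Fin p) ℂ) (D i j))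

open LinearMap

section TensorComul

variable {R ι M N : Type*} [CommSemiring R] [AddCommMonoid M] [Module R M]
  [AddCommMonoid N] [Module R N]

def IsCoassocFamily (D : ι → N →ₗ[R] N ⊗[R] N) : Prop :=
  ∀ i j, (TensorProduct.assoc R N N N).toLinearMap ∘ₗ (D i).rTensor N ∘ₗ D j =
    (D j).lTensor N ∘ₗ D i

def tensorComul (f : M →ₗ[R] M ⊗[R] M) (g : N →ₗ[R] N ⊗[R] N) :
    M ⊗[R] N →ₗ[R] (M ⊗[R] N) ⊗[R] (M ⊗[R] N) :=
  (tensorTensorTensorComm R M M N N).toLinearMap ∘ₗ map f g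

variable (R M N) in
def tensorShuffle₃ :
    (M ⊗[R] (M ⊗[R] M)) ⊗[R] (N ⊗[R] (N ⊗[R] N)) →ₗ[R]
      (M ⊗[R] N) ⊗[R] ((M ⊗[R] N) ⊗[R] (M ⊗[R] N)) :=
  (tensorTensorTensorComm R M M N N).toLinearMap.lTensor (M ⊗[R] N) ∘ₗ
    (tensorTensorTensorComm R M (M ⊗[R] M) N (N ⊗[R] N)).toLinearMap

theorem lTensor_tensorComul_comp_tensorComul (f f' : M →ₗ[R] M ⊗[R] M)
    (g g' : N →ₗ[R] N ⊗[R] N) :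
    (tensorComul f g).lTensor (M ⊗[R] N) ∘ₗ tensorComul f' g' =
      tensorShuffle₃ R M N ∘ₗ map (f.lTensor M ∘ₗ f') (g.lTensor N ∘ₗ g') := by
  have hnat : (map f g).lTensor (M ⊗[R] N) ∘ₗ (tensorTensorTensorComm R M M N N).toLinearMap =
      (tensorTensorTensorComm R _ _ _ _).toLinearMap ∘ₗ map (f.lTensor M) (g.lTensor N) := by
    rw [lTensor_def, lTensor_def, lTensor_def, tensorTensorTensorComm_comp_map, map_id]
  rw [tensorComul, tensorComul, lTensor_comp, tensorShuffle₃, map_comp, comp_assoc,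
    ← comp_assoc (map f' g'), hnat, comp_assoc, comp_assoc]

theorem assoc_comp_rTensor_tensorComul_comp_tensorComul (f f' : M →ₗ[R] M ⊗[R] M)
    (g g' : N →ₗ[R] N ⊗[R] N) :
    (TensorProduct.assoc R _ _ _).toLinearMap ∘ₗ (tensorComul f g).rTensor (M ⊗[R] N) ∘ₗ
        tensorComul f' g' =
      tensorShuffle₃ R M N ∘ₗ
        map ((TensorProduct.assoc R M M M).toLinearMap ∘ₗ f.rTensor M ∘ₗ f')
          ((TensorProduct.assoc R N N N).toLinearMap ∘ₗ g.rTensor N ∘ₗ g') := by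
  have hnat : (map f g).rTensor (M ⊗[R] N) ∘ₗ (tensorTensorTensorComm R M M N N).toLinearMap =
      (tensorTensorTensorComm R _ _ _ _).toLinearMap ∘ₗ map (f.rTensor M) (g.rTensor N) := by
    rw [rTensor_def, rTensor_def, rTensor_def, tensorTensorTensorComm_comp_map, map_id]
  have hshuffle : ((TensorProduct.assoc R _ _ _).toLinearMap ∘ₗ
      (tensorTensorTensorComm R M M N N).toLinearMap.rTensor (M ⊗[R] N)) ∘ₗ
        (tensorTensorTensorComm R (M ⊗[R] M) M (N ⊗[R] N) N).toLinearMap =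
      tensorShuffle₃ R M N ∘ₗ
        map (TensorProduct.assoc R M M M).toLinearMap (TensorProduct.assoc R N N N).toLinearMap := by
    ext; rfl
  rw [tensorComul, tensorComul, rTensor_comp, map_comp, map_comp, comp_assoc,
    ← comp_assoc (map f' g'), hnat]
  simp only [← comp_assoc, hshuffle]

theorem sum_tensorComul_coassoc [Fintype ι] {L : ι → M →ₗ[R] M ⊗[R] M}
    {D : ι → N →ₗ[R] N ⊗[R] N} (hL : IsCoassocFamily L) (hD : IsCoassocFamily D) :
    (TensorProduct.assoc R _ _ _).toLinearMap ∘ₗ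
        (∑ i, tensorComul (L i) (D i)).rTensor (M ⊗[R] N) ∘ₗ ∑ i, tensorComul (L i) (D i) =
      (∑ i, tensorComul (L i) (D i)).lTensor (M ⊗[R] N) ∘ₗ ∑ i, tensorComul (L i) (D i) := by
  have hpair : ∀ i j, (TensorProduct.assoc R _ _ _).toLinearMap ∘ₗ
      (tensorComul (L i) (D i)).rTensor (M ⊗[R] N) ∘ₗ tensorComul (L j) (D j) =
        (tensorComul (L j) (D j)).lTensor (M ⊗[R] N) ∘ₗ tensorComul (L i) (D i) := by
    intro i j
    rw [assoc_comp_rTensor_tensorComul_comp_tensorComul, lTensor_tensorComul_comp_tensorComul,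
      hL, hD]
  refine LinearMap.ext fun x => ?_
  simp only [comp_apply, LinearMap.sum_apply, ← coe_rTensorHom, ← coe_lTensorHom, map_sum,
    LinearEquiv.coe_coe]
  rw [Finset.sum_comm]
  exact Finset.sum_congr rfl fun i _ => Finset.sum_congr rfl fun j _ =>
    LinearMap.congr_fun (hpair i j) x

end TensorComul

section MatComul

open Matrix

variable {R n : Type*} [CommSemiring R] [Fintype n] [DecidableEq n]

theorem single_one_mul_single_one (i j k l : n) :
    (single i j 1 : Matrix n n R) * single k l 1 = if j = k then single i l 1 else 0 := by
  split_ifs with h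
  · rw [h, single_mul_single_same, one_mul]
  · exact single_mul_single_of_ne 1 i j k h 1

def matComul (i j : n) : Matrix n n R →ₗ[R] Matrix n n R ⊗[R] Matrix n n R :=
  ∑ k, (TensorProduct.mk R _ _).flip (single j k 1) ∘ₗ LinearMap.mulRight R (single k i 1)

theorem matComul_apply (i j : n) (T : Matrix n n R) :
    matComul i j T = ∑ k, (T * single k i 1) ⊗ₜ[R] single j k 1 := by
  simp [matComul]

theorem isCoassocFamily_matComul :
    IsCoassocFamily (fun ij : n × n => matComul (R := R) ij.1 ij.2) := by
  rintro ⟨i, j⟩ ⟨k, l⟩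
  refine LinearMap.ext fun T => ?_
  simp [matComul_apply, mul_assoc, single_one_mul_single_one, ite_tmul]

end MatComul

theorem Lmap_tmul (i j k : Fin p) (T : Matrix (Fin p) (Fin p) ℂ) (z : A ⊗[ℂ] A) :
    Lmap i j k (T ⊗ₜ z) =
      tensorTensorTensorComm ℂ _ _ A A (((T * matUnit k i) ⊗ₜ matUnit j k) ⊗ₜ z) := by
  induction z using TensorProduct.induction_on with
  | zero => simp only [tmul_zero, map_zero]
  | tmul x y => rfl
  | add u v hu hv => simp only [tmul_add, map_add, hu, hv]

theorem Dbig_eq_sum_tensorComul (D : Fin p → Fin p → (A →ₗ[ℂ] A ⊗[ℂ] A)) :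
    Dbig D = ∑ ij : Fin p × Fin p, tensorComul (matComul ij.1 ij.2) (D ij.1 ij.2) := by
  refine TensorProduct.ext' fun T a => ?_
  simp [Dbig, Lmap_tmul, tensorComul, matComul_apply, Fintype.sum_prod_type, sum_tmul, matUnit]

theorem stmt7 (D : Fin p → Fin p → (A →ₗ[ℂ] A ⊗[ℂ] A))
    -- each ∂_{ij} is coassociative and the family is compatible:
    -- (∂_{kl} ⊗ id) ∘ ∂_{ij} = (id ⊗ ∂_{ij}) ∘ ∂_{kl} for all indices
    (hcompat : ∀ (i j k l : Fin p) (a : A),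
      TensorProduct.assoc ℂ A A A (LinearMap.rTensor A (D i j) (D k l a)) =
        LinearMap.lTensor A (D k l) (D i j a)) :
    ∀ x : Matrix (Fin p) (Fin p) ℂ ⊗[ℂ] A,
      TensorProduct.assoc ℂ
          (Matrix (Fin p) (Fin p) ℂ ⊗[ℂ] A)
          (Matrix (Fin p) (Fin p) ℂ ⊗[ℂ] A)
          (Matrix (Fin p) (Fin p) ℂ ⊗[ℂ] A)
          (LinearMap.rTensor (Matrix (Fin p) (Fin p) ℂ ⊗[ℂ] A) (Dbig D) (Dbig D x)) =
        LinearMap.lTensor (Matrix (Fin p) (Fin p) ℂ ⊗[ℂ] A) (Dbig D) (Dbig D x) := by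
  have hD : IsCoassocFamily (fun ij : Fin p × Fin p => D ij.1 ij.2) :=
    fun ij kl => LinearMap.ext (hcompat ij.1 ij.2 kl.1 kl.2)
  intro x
  rw [Dbig_eq_sum_tensorComul]
  exact LinearMap.congr_fun (sum_tensorComul_coassoc isCoassocFamily_matComul hD) x
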